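/- Let φ : ℚ⟨Z⟩ → A be an algebra homomorphism from the block shuffle algebra (ℚ⟨Z⟩, ⊞) to a commutative ℚ-algebra A that kills all products: φ(u ⊞ v) = 0 for all nonempty u,v. Then for any z ∈ ℚZ and k ≥ 0, φ(z^{2k+1}) = (1/(2k+1)) φ(z^{◊(2k+1)}) and φ(z^{2k}) = 0 for k ≥ 1, where z^n denotes the concatenation power and z^{◊n} the ◊-power (with z_a ◊ z_b = z_{a+b}). -/

import Mathlib

/- STATEMENT 16: let φ be an algebra homomorphism from the block shuffle algebra
(ℚ⟨Z⟩, ⊞), Z = {z_m}, to a commutative ℚ-algebra A that kills all products of nonempty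
elements. Then φ(z^{2k+1}) = (1/(2k+1)) φ(z^{◊(2k+1)}) for z ∈ ℚZ and k ≥ 0, and
φ(z^{2k}) = 0 for k ≥ 1, where zⁿ is the concatenation power and z^{◊n} the ◊-power
(z_a ◊ z_b = z_{a+b}). -/

abbrev QW := List ℕ →₀ ℚ

/-- Prepend a letter to every word of a polynomial. -/
noncomputable def pre (a : ℕ) (p : QW) : QW :=
  Finsupp.mapDomain (a :: ·) p

/-- Shuffle product of two words. -/
noncomputable def sh : List ℕ → List ℕ → QW
  | [], v => Finsupp.single v 1
  | u, [] => Finsupp.single u 1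
  | a :: u, b :: v => pre a (sh u (b :: v)) + pre b (sh (a :: u) v)
  termination_by u v => u.length + v.length

/-- Bilinear extension of the shuffle product. -/
noncomputable def shP (p q : QW) : QW :=
  p.sum fun u r => q.sum fun v s => (r * s) • sh u v

/-- The map ζ_a on words: ζ_a(z_b w) = z_{a+b} w, ζ_a(1) = 0. -/
noncomputable def zetaW (a : ℕ) : List ℕ → QW
  | [] => 0
  | b :: t => Finsupp.single ((a + b) :: t) 1

/-- Linear extension of ζ_a. -/
noncomputable def zetaMap (a : ℕ) (p : QW) : QW :=
  p.sum fun w r => r • zetaW a w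

/-- The block shuffle product of two words:
`z_a u ⊞ z_b v = z_a(u ⊞ z_b v) + z_b(z_a u ⊞ v) − ζ_{a+b}(u ⊞ v)`. -/
noncomputable def bsh : List ℕ → List ℕ → QW
  | [], v => Finsupp.single v 1
  | u, [] => Finsupp.single u 1
  | a :: u, b :: v =>
      pre a (bsh u (b :: v)) + pre b (bsh (a :: u) v) - zetaMap (a + b) (bsh u v)
  termination_by u v => u.length + v.length

/-- Bilinear extension of the block shuffle product. -/
noncomputable def bshP (p q : QW) : QW :=
  p.sum fun u r => q.sum fun v s => (r * s) • bsh u v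

/-- Concatenation product on ℚ⟨Z⟩. -/
noncomputable def concP (p q : QW) : QW :=
  p.sum fun u r => q.sum fun v s => Finsupp.single (u ++ v) (r * s)

/-- Concatenation powers. -/
noncomputable def cpow (p : QW) : ℕ → QW
  | 0 => Finsupp.single [] 1
  | n + 1 => concP p (cpow p n)

/-- The embedding ℚZ → ℚ⟨Z⟩ sending each letter to the corresponding length-one word. -/
noncomputable def emb (z : ℕ →₀ ℚ) : QW :=
  z.sum fun a r => Finsupp.single [a] r

/-- The ◊ product on ℚZ, extending z_a ◊ z_b = z_{a+b} bilinearly. -/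
noncomputable def dmul (z w : ℕ →₀ ℚ) : ℕ →₀ ℚ :=
  z.sum fun a r => w.sum fun b s => Finsupp.single (a + b) (r * s)

/-- `dpowSucc z n` is the (n+1)-st ◊-power `z^{◊(n+1)}`. -/
noncomputable def dpowSucc (z : ℕ →₀ ℚ) : ℕ → (ℕ →₀ ℚ)
  | 0 => z
  | n + 1 => dmul z (dpowSucc z n)

/-! Write `Z` for the letter `z` in the concatenation algebra and
`S_n(y) = ∑_{i+j=n} Z^i y Z^j` for the sum of all insertions of a letter `y` into `Zⁿ`.
Unfolding the recursion of `⊞` gives `y ⊞ Z = S_1(y)` and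
`y ⊞ Z^(m+2) = S_{m+2}(y) - S_m(y ◊ z ◊ z)`: the `ζ`-term fuses `y` with the two letters after
it. As `φ` kills these products, `φ(S_1(y)) = 0` and `φ(S_{m+2}(y)) = φ(S_m(y ◊ z ◊ z))`.
Starting from `y = z`, where `S_n(z) = (n+1) Z^(n+1)`, two steps at a time this gives
`(2k+1) φ(Z^(2k+1)) = φ(z^{◊(2k+1)})` and `(2k+2) φ(Z^(2k+2)) = φ(S_1(z^{◊(2k+1)})) = 0`. -/

/- `QW` carries the pointwise product of `Finsupp`, so concatenation is computed in the monoid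
algebra of the free monoid, and `◊` in the monoid algebra of `(ℕ, +)`. -/
local notation "ℚ⟨Z⟩" => MonoidAlgebra ℚ (FreeMonoid ℕ)
local notation "ℚZ" => AddMonoidAlgebra ℚ ℕ

noncomputable def toConcat : QW ≃ₗ[ℚ] ℚ⟨Z⟩ := (MonoidAlgebra.coeffLinearEquiv ℚ).symm

noncomputable def letter : ℚZ →ₗ[ℚ] ℚ⟨Z⟩ :=
  toConcat.toLinearMap ∘ₗ Finsupp.lmapDomain ℚ ℚ FreeMonoid.of ∘ₗ
    (AddMonoidAlgebra.coeffLinearEquiv ℚ).toLinearMap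

noncomputable def blockShuffle : ℚ⟨Z⟩ →ₗ[ℚ] ℚ⟨Z⟩ →ₗ[ℚ] ℚ⟨Z⟩ :=
  LinearMap.compl₁₂
    (Finsupp.linearCombination ℚ fun u => Finsupp.linearCombination ℚ fun v => toConcat (bsh u v))
    toConcat.symm.toLinearMap toConcat.symm.toLinearMap

lemma toConcat_single (w : List ℕ) (r : ℚ) :
    toConcat (Finsupp.single w r) = MonoidAlgebra.single (FreeMonoid.ofList w) r := rfl

lemma toConcat_single_mul_single (u v : List ℕ) :
    toConcat (Finsupp.single u 1) * toConcat (Finsupp.single v 1) =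
      toConcat (Finsupp.single (u ++ v) 1) := by
  rw [toConcat_single, toConcat_single, toConcat_single, MonoidAlgebra.single_mul_single, one_mul,
    FreeMonoid.ofList_append]

lemma of_eq_toConcat (w : FreeMonoid ℕ) :
    MonoidAlgebra.of ℚ (FreeMonoid ℕ) w = toConcat (Finsupp.single w.toList 1) := rfl

lemma toConcat_concP (p q : QW) : toConcat (concP p q) = toConcat p * toConcat q := by
  apply MonoidAlgebra.coeff_injective
  simp only [MonoidAlgebra.mul_def, MonoidAlgebra.coeff_finsuppSum, MonoidAlgebra.coeff_single]
  rfl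

lemma toConcat_cpow (p : QW) (n : ℕ) : toConcat (cpow p n) = toConcat p ^ n := by
  induction n with
  | zero => rw [cpow, pow_zero]; rfl
  | succ n ih => rw [cpow, toConcat_concP, ih, pow_succ']

lemma toConcat_pre (a : ℕ) (p : QW) :
    toConcat (pre a p) = toConcat (Finsupp.single [a] 1) * toConcat p := by
  rw [← toConcat_concP, concP, Finsupp.sum_single_index (by simp), pre, Finsupp.mapDomain]
  exact congrArg toConcat (Finsupp.sum_congr fun v _ => by simp)

lemma toConcat_emb (z : ℕ →₀ ℚ) : toConcat (emb z) = letter (AddMonoidAlgebra.ofCoeff z) := rfl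

lemma letter_single (a : ℕ) (r : ℚ) :
    letter (AddMonoidAlgebra.single a r) = toConcat (Finsupp.single [a] r) :=
  congrArg toConcat (Finsupp.mapDomain_single (f := FreeMonoid.of))

lemma letter_of (a : ℕ) :
    letter (AddMonoidAlgebra.of ℚ ℕ (Multiplicative.ofAdd a)) = toConcat (Finsupp.single [a] 1) :=
  letter_single a 1

lemma ofCoeff_dmul (z w : ℕ →₀ ℚ) :
    (AddMonoidAlgebra.ofCoeff (dmul z w) : ℚZ) =
      AddMonoidAlgebra.ofCoeff z * AddMonoidAlgebra.ofCoeff w := by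
  apply AddMonoidAlgebra.coeff_injective
  simp [AddMonoidAlgebra.mul_def, dmul]

lemma ofCoeff_dpowSucc (z : ℕ →₀ ℚ) (n : ℕ) :
    (AddMonoidAlgebra.ofCoeff (dpowSucc z n) : ℚZ) = AddMonoidAlgebra.ofCoeff z ^ (n + 1) := by
  induction n with
  | zero => rw [dpowSucc, pow_one]
  | succ n ih => rw [dpowSucc, ofCoeff_dmul, ih, ← pow_succ']

lemma blockShuffle_toConcat_single (u v : List ℕ) :
    blockShuffle (toConcat (Finsupp.single u 1)) (toConcat (Finsupp.single v 1)) =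
      toConcat (bsh u v) := by
  simp [blockShuffle]

lemma bsh_nil_left (v : List ℕ) : bsh [] v = Finsupp.single v 1 := by
  cases v <;> rw [bsh]

lemma bsh_nil_right (u : List ℕ) : bsh u [] = Finsupp.single u 1 := by
  cases u with
  | nil => rw [bsh]
  | cons a u => rw [bsh]; simp

lemma bsh_singleton_singleton (a b : ℕ) :
    bsh [a] [b] = Finsupp.single [a, b] 1 + Finsupp.single [b, a] 1 := by
  rw [bsh, bsh_nil_left, bsh_nil_left, bsh_nil_right]
  simp [pre, zetaMap, zetaW]

lemma bsh_singleton_cons_cons (a b c : ℕ) (w : List ℕ) :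
    bsh [a] (b :: c :: w) =
      Finsupp.single (a :: b :: c :: w) 1 + pre b (bsh [a] (c :: w)) -
        Finsupp.single ((a + b + c) :: w) 1 := by
  rw [bsh, bsh_nil_left, bsh_nil_left]
  simp [pre, zetaMap, zetaW]

lemma blockShuffle_letter_letter (y x : ℚZ) :
    blockShuffle (letter y) (letter x) = letter y * letter x + letter x * letter y := by
  induction y using AddMonoidAlgebra.induction_on with
  | add y₁ y₂ h₁ h₂ => simp only [map_add, LinearMap.add_apply, add_mul, mul_add, h₁, h₂]; abel
  | smul r y h =>
    simp only [map_smul, LinearMap.smul_apply, smul_mul_assoc, mul_smul_comm, h, smul_add]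
  | of a =>
  induction x using AddMonoidAlgebra.induction_on with
  | add x₁ x₂ h₁ h₂ => simp only [map_add, add_mul, mul_add, h₁, h₂]; abel
  | smul r x h => simp only [map_smul, smul_mul_assoc, mul_smul_comm, h, smul_add]
  | of b =>
  rw [letter_of, letter_of, blockShuffle_toConcat_single, bsh_singleton_singleton, map_add,
    toConcat_single_mul_single, toConcat_single_mul_single]
  rfl

lemma blockShuffle_letter_letter_mul_letter_mul (y x x' : ℚZ) (q : ℚ⟨Z⟩) :
    blockShuffle (letter y) (letter x * (letter x' * q)) =
      letter y * (letter x * (letter x' * q)) + letter x * blockShuffle (letter y) (letter x' * q)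
        - letter (y * x * x') * q := by
  induction y using AddMonoidAlgebra.induction_on with
  | add y₁ y₂ h₁ h₂ => simp only [map_add, LinearMap.add_apply, add_mul, mul_add, h₁, h₂]; abel
  | smul r y h =>
    simp only [map_smul, LinearMap.smul_apply, smul_mul_assoc, mul_smul_comm, h, smul_add, smul_sub]
  | of a =>
  induction x using AddMonoidAlgebra.induction_on with
  | add x₁ x₂ h₁ h₂ => simp only [map_add, add_mul, mul_add, h₁, h₂]; abel
  | smul r x h => simp only [map_smul, smul_mul_assoc, mul_smul_comm, h, smul_add, smul_sub]
  | of b =>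
  induction x' using AddMonoidAlgebra.induction_on with
  | add x₁ x₂ h₁ h₂ => simp only [map_add, add_mul, mul_add, h₁, h₂]; abel
  | smul r x h => simp only [map_smul, smul_mul_assoc, mul_smul_comm, h, smul_add, smul_sub]
  | of c =>
  induction q using MonoidAlgebra.induction_on with
  | add q₁ q₂ h₁ h₂ => simp only [map_add, mul_add, h₁, h₂]; abel
  | smul r q h => simp only [map_smul, mul_smul_comm, h, smul_add, smul_sub]
  | of w =>
  simp only [AddMonoidAlgebra.of_apply, AddMonoidAlgebra.single_mul_single, toAdd_ofAdd, mul_one,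
    letter_single, of_eq_toConcat, toConcat_single_mul_single, blockShuffle_toConcat_single,
    List.singleton_append]
  rw [bsh_singleton_cons_cons, map_sub, map_add, toConcat_pre]

section InsertionSum

open Finset

variable {R : Type*} [Semiring R]

def insertionSum (x y : R) (n : ℕ) : R :=
  ∑ p ∈ antidiagonal n, x ^ p.1 * y * x ^ p.2

lemma insertionSum_zero (x y : R) : insertionSum x y 0 = y := by
  simp [insertionSum]

lemma insertionSum_succ (x y : R) (n : ℕ) :
    insertionSum x y (n + 1) = y * x ^ (n + 1) + x * insertionSum x y n := by
  rw [insertionSum, Nat.sum_antidiagonal_succ, insertionSum, mul_sum]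
  simp only [pow_zero, one_mul, pow_succ', mul_assoc]

lemma insertionSum_self (x : R) (n : ℕ) : insertionSum x x n = (n + 1) • x ^ (n + 1) := by
  rw [insertionSum, sum_congr rfl fun p hp => ?_, sum_const, Nat.card_antidiagonal]
  rw [← pow_succ, ← pow_add, add_right_comm, mem_antidiagonal.mp hp]

end InsertionSum

lemma blockShuffle_letter_pow_add_two (y z : ℚZ) (m : ℕ) :
    blockShuffle (letter y) (letter z ^ (m + 2)) =
      insertionSum (letter z) (letter y) (m + 2) -
        insertionSum (letter z) (letter (y * z * z)) m := by
  induction m with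
  | zero =>
    have h := blockShuffle_letter_letter_mul_letter_mul y z z 1
    rw [mul_one, mul_one, blockShuffle_letter_letter] at h
    simp only [insertionSum_succ, insertionSum_zero, pow_succ', pow_zero, mul_one, h]
  | succ m ih =>
    rw [pow_succ', pow_succ', blockShuffle_letter_letter_mul_letter_mul, ← pow_succ', ih]
    simp only [insertionSum_succ, pow_succ', mul_add, mul_sub, mul_assoc]
    abel

section KillsLetterProducts

variable {A : Type*} [AddCommGroup A] [Module ℚ A]

def KillsLetterProducts (ψ : ℚ⟨Z⟩ →ₗ[ℚ] A) : Prop :=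
  ∀ (y x : ℚZ) (q : ℚ⟨Z⟩), ψ (blockShuffle (letter y) (letter x * q)) = 0

lemma killsLetterProducts_of_map_bsh_eq_zero (φ : QW →ₗ[ℚ] A)
    (hkill : ∀ u v : List ℕ, u ≠ [] → v ≠ [] → φ (bsh u v) = 0) :
    KillsLetterProducts (φ ∘ₗ toConcat.symm.toLinearMap) := by
  intro y x q
  induction y using AddMonoidAlgebra.induction_on with
  | add y₁ y₂ h₁ h₂ => simp only [map_add, LinearMap.add_apply, h₁, h₂, add_zero]
  | smul r y h => simp only [map_smul, LinearMap.smul_apply, h, smul_zero]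
  | of a =>
  induction x using AddMonoidAlgebra.induction_on with
  | add x₁ x₂ h₁ h₂ => simp only [map_add, add_mul, h₁, h₂, add_zero]
  | smul r x h => simp only [map_smul, smul_mul_assoc, h, smul_zero]
  | of b =>
  induction q using MonoidAlgebra.induction_on with
  | add q₁ q₂ h₁ h₂ => simp only [map_add, mul_add, h₁, h₂, add_zero]
  | smul r q h => simp only [map_smul, mul_smul_comm, h, smul_zero]
  | of w =>
  rw [letter_of, letter_of, of_eq_toConcat, toConcat_single_mul_single,
    blockShuffle_toConcat_single, LinearMap.comp_apply, LinearEquiv.coe_coe,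
    LinearEquiv.symm_apply_apply]
  exact hkill _ _ (List.cons_ne_nil _ _) (List.cons_ne_nil _ _)

variable {ψ : ℚ⟨Z⟩ →ₗ[ℚ] A}

lemma KillsLetterProducts.map_insertionSum_one (hψ : KillsLetterProducts ψ) (y z : ℚZ) :
    ψ (insertionSum (letter z) (letter y) 1) = 0 := by
  rw [← hψ y z 1, mul_one, blockShuffle_letter_letter, insertionSum_succ, insertionSum_zero,
    pow_one, add_comm]

lemma KillsLetterProducts.map_insertionSum_add_two (hψ : KillsLetterProducts ψ) (y z : ℚZ)
    (m : ℕ) :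
    ψ (insertionSum (letter z) (letter y) (m + 2)) =
      ψ (insertionSum (letter z) (letter (y * z * z)) m) := by
  have h := hψ y z (letter z ^ (m + 1))
  rwa [← pow_succ', blockShuffle_letter_pow_add_two, map_sub, sub_eq_zero] at h

lemma KillsLetterProducts.map_insertionSum_two_mul_add (hψ : KillsLetterProducts ψ) (y z : ℚZ)
    (k r : ℕ) :
    ψ (insertionSum (letter z) (letter y) (2 * k + r)) =
      ψ (insertionSum (letter z) (letter (y * z ^ (2 * k))) r) := by
  induction k generalizing y with
  | zero => rw [mul_zero, pow_zero, mul_one, zero_add]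
  | succ k ih =>
    rw [show 2 * (k + 1) + r = 2 * k + r + 2 by ring, hψ.map_insertionSum_add_two, ih]
    congr 3
    ring

lemma KillsLetterProducts.map_letter_pow_odd (hψ : KillsLetterProducts ψ) (z : ℚZ) (k : ℕ) :
    (2 * k + 1 : ℚ) • ψ (letter z ^ (2 * k + 1)) = ψ (letter (z ^ (2 * k + 1))) := by
  have h := hψ.map_insertionSum_two_mul_add z z k 0
  rwa [insertionSum_self, map_nsmul, ← Nat.cast_smul_eq_nsmul ℚ, insertionSum_zero, ← pow_succ',
    add_zero, Nat.cast_add_one, Nat.cast_mul, Nat.cast_two] at h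

lemma KillsLetterProducts.map_letter_pow_even (hψ : KillsLetterProducts ψ) (z : ℚZ) (k : ℕ) :
    ψ (letter z ^ (2 * k + 2)) = 0 := by
  have h := hψ.map_insertionSum_two_mul_add z z k 1
  rw [insertionSum_self, map_nsmul, ← Nat.cast_smul_eq_nsmul ℚ, hψ.map_insertionSum_one] at h
  exact (smul_eq_zero.mp h).resolve_left (by positivity)

end KillsLetterProducts

theorem odd_powers_and_even_powers_general {A : Type*} [CommRing A] [Algebra ℚ A]
    (φ : QW →ₗ[ℚ] A)
    (hkill : ∀ u v : List ℕ, u ≠ [] → v ≠ [] → φ (bsh u v) = 0)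
    (z : ℕ →₀ ℚ) :
    (∀ k : ℕ, φ (cpow (emb z) (2 * k + 1)) =
      (1 / (2 * k + 1) : ℚ) • φ (emb (dpowSucc z (2 * k)))) ∧
    (∀ k : ℕ, 1 ≤ k → φ (cpow (emb z) (2 * k)) = 0) := by
  set ψ := φ ∘ₗ toConcat.symm.toLinearMap
  have hψ := killsLetterProducts_of_map_bsh_eq_zero φ hkill
  have hφ (p : QW) : φ p = ψ (toConcat p) := by simp [ψ]
  refine ⟨fun k => ?_, fun k hk => ?_⟩
  · rw [hφ, hφ, toConcat_cpow, toConcat_emb, toConcat_emb, ofCoeff_dpowSucc,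
      ← hψ.map_letter_pow_odd, smul_smul, one_div, inv_mul_cancel₀ (by positivity), one_smul]
  · obtain ⟨j, rfl⟩ := Nat.exists_eq_add_of_le' hk
    rw [hφ, toConcat_cpow, toConcat_emb, mul_add_one, hψ.map_letter_pow_even]

theorem odd_powers_and_even_powers {A : Type*} [CommRing A] [Algebra ℚ A]
    (φ : QW →ₗ[ℚ] A)
    (hone : φ (Finsupp.single [] 1) = 1)
    (hmul : ∀ p q : QW, φ (bshP p q) = φ p * φ q)
    (hkill : ∀ u v : List ℕ, u ≠ [] → v ≠ [] → φ (bsh u v) = 0)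
    (z : ℕ →₀ ℚ) :
    (∀ k : ℕ, φ (cpow (emb z) (2 * k + 1)) =
      (1 / (2 * k + 1) : ℚ) • φ (emb (dpowSucc z (2 * k)))) ∧
    (∀ k : ℕ, 1 ≤ k → φ (cpow (emb z) (2 * k)) = 0) :=
  odd_powers_and_even_powers_general φ hkill z
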